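/- arXiv:1511.00803 — 2 statements merged into one kernel-verified Lean document; each statement's English description precedes it below -/
import Mathlib

section
/- Let q ≠ 2 be a prime power and let C be a linear code in F_q^n (an F_q-linear subspace of F_q^n) such that every codeword of C has even Hamming weight. Let c ∈ C be a codeword of weight two with support {i, j}, and let x ∈ C be an arbitrary codeword. Then there exists λ ∈ F_q such that (x_i, x_j) = (λ c_i, λ c_j). -/
open Finset

/-
Let `a = x i / c i`. Since `c` vanishes off `{i, j}`, the words `x - μ • c` (all in `C`) share
their coordinates off `{i, j}`, so their weights differ only through `[x i ≠ μ c i] + [x j ≠ μ c j]`.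
If `x j ≠ a c j`, this count is `1` at `μ = a` and `2` at any `μ ∉ {x i / c i, x j / c j}`, which
exists because `q ≥ 3`; the two weights then have different parities.
-/

theorem hammingNorm_sub_smul_of_support_subset {ι R : Type*} [Fintype ι] [DecidableEq ι]
    [Ring R] [DecidableEq R] (s : Finset ι) {c : ι → R} (hc : ∀ k ∉ s, c k = 0)
    (x : ι → R) (μ : R) :
    hammingNorm (x - μ • c) = #{k ∈ s | x k ≠ μ * c k} + #{k ∈ sᶜ | x k ≠ 0} := by
  rw [hammingNorm, ← card_filter_add_card_filter_not (· ∈ s), filter_filter,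
    filter_filter]
  congr 2
  · ext k
    simp [sub_ne_zero, and_comm]
  · ext k
    simp +contextual [hc, and_comm]

theorem weight_two_support_scalar_general {F : Type*} [Field F] [Fintype F] [DecidableEq F] {n : ℕ}
    (hq : Fintype.card F ≠ 2)
    (C : Submodule F (Fin n → F))
    (heven : ∀ v ∈ C, Even (hammingNorm v))
    (c : Fin n → F) (hc : c ∈ C)
    (i j : Fin n) (hsupp : {k | c k ≠ 0} = {i, j})
    (x : Fin n → F) (hx : x ∈ C) :
    ∃ l : F, x i = l * c i ∧ x j = l * c j := by
  have hsupp' (k : Fin n) : c k ≠ 0 ↔ k = i ∨ k = j := Set.ext_iff.mp hsupp k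
  have hci : c i ≠ 0 := (hsupp' i).mpr (Or.inl rfl)
  have hcj : c j ≠ 0 := (hsupp' j).mpr (Or.inr rfl)
  have hc_out : ∀ k ∉ ({i, j} : Finset (Fin n)), c k = 0 := by
    intro k hk
    by_contra h
    simp_all
  refine ⟨x i / c i, (div_mul_cancel₀ _ hci).symm, ?_⟩
  by_contra hxj
  have hij : i ≠ j := by
    rintro rfl
    exact hxj (div_mul_cancel₀ _ hci).symm
  obtain ⟨ν, hνi, hνj⟩ : ∃ ν : F, ν ≠ x i / c i ∧ ν ≠ x j / c j :=
    Cardinal.exists_ne_ne_of_three_le (by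
      have : 1 < Fintype.card F := Fintype.one_lt_card
      rw [Cardinal.mk_fintype]
      exact_mod_cast (by omega : 3 ≤ Fintype.card F)) _ _
  have hdiff_quot : #{k ∈ ({i, j} : Finset (Fin n)) | x k ≠ x i / c i * c k} = 1 := by
    rw [filter_insert, if_neg (by simp [div_mul_cancel₀ _ hci]), filter_singleton, if_pos hxj,
      card_singleton]
  have hdiff_ν : #{k ∈ ({i, j} : Finset (Fin n)) | x k ≠ ν * c k} = 2 := by
    rw [filter_insert, if_pos fun h ↦ hνi ((eq_div_iff hci).mpr h.symm), filter_singleton,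
      if_pos fun h ↦ hνj ((eq_div_iff hcj).mpr h.symm), card_pair hij]
  obtain ⟨a, ha⟩ := heven _ (C.sub_mem hx (C.smul_mem (x i / c i) hc))
  obtain ⟨b, hb⟩ := heven _ (C.sub_mem hx (C.smul_mem ν hc))
  rw [hammingNorm_sub_smul_of_support_subset _ hc_out, hdiff_quot] at ha
  rw [hammingNorm_sub_smul_of_support_subset _ hc_out, hdiff_ν] at hb
  omega

/-- In a linear code over `F_q`, `q ≠ 2`, all of whose codewords have even
Hamming weight, every codeword agrees on the support `{i, j}` of a weight-two codeword `c`
with a scalar multiple of `c`. -/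
theorem weight_two_support_scalar {F : Type*} [Field F] [Fintype F] [DecidableEq F] {n : ℕ}
    (hq : Fintype.card F ≠ 2)
    (C : Submodule F (Fin n → F))
    (heven : ∀ v ∈ C, Even (hammingNorm v))
    (c : Fin n → F) (hc : c ∈ C) (hcw : hammingNorm c = 2)
    (i j : Fin n) (hij : i ≠ j) (hsupp : {k | c k ≠ 0} = {i, j})
    (x : Fin n → F) (hx : x ∈ C) :
    ∃ l : F, x i = l * c i ∧ x j = l * c j :=
  weight_two_support_scalar_general hq C heven c hc i j hsupp x hx
end

section
/- Let C be a linear code over F_q with homogeneous weight enumerator W_C(x,y). The stabilizer of W_C(x,y) in GL_2(C) is finite if and only if the one-variable weight enumerator W_C(x) = W_C(x,1) has at least 3 distinct complex roots. -/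
/-!
Since the zero word is the only codeword of weight `0`, `W_C(x, 1)` is monic of degree `n`, so over
`ℂ` the binary form `W_C` is the product of the linear forms `x - r y` over the roots `r` of
`W_C(x, 1)`. A matrix `A` fixing `W_C` maps the zero set of `W_C`, the union of the lines through
`(r, 1)`, to itself, so its Möbius map `z ↦ (a z + b) / (c z + d)` permutes the roots. If there are
three distinct roots `z₁, z₂, z₃`, two stabilizing matrices inducing the same map on them differ by
a scalar `μ` (a `2 × 2` matrix with three pairwise independent eigenvectors is scalar), and
`W_C(1, 0) = 1` forces `μ ^ n = 1`; so the stabilizer is finite. If all roots lie in `{r, r'}`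
with `r ≠ r'`, then `W_C = (x - r y) ^ a (x - r' y) ^ b`, and every matrix scaling these two linear
forms by `u` and `v` with `u ^ a v ^ b = 1` fixes `W_C`; there are infinitely many such matrices.
-/

open Finset

noncomputable def weightEnum (R : Type*) [CommRing R] {F : Type*} [Field F] [Fintype F]
    [DecidableEq F] {ι : Type*} [Fintype ι] (C : Submodule F (ι → F)) : Polynomial R :=
  ∑ c ∈ (Set.toFinite (C : Set (ι → F))).toFinset,
    Polynomial.X ^ (Fintype.card ι - hammingNorm c)

noncomputable def homWeightEnum (R : Type*) [CommRing R] {F : Type*} [Field F] [Fintype F]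
    [DecidableEq F] {ι : Type*} [Fintype ι] (C : Submodule F (ι → F)) : MvPolynomial (Fin 2) R :=
  ∑ c ∈ (Set.toFinite (C : Set (ι → F))).toFinset,
    MvPolynomial.X 0 ^ (Fintype.card ι - hammingNorm c) * MvPolynomial.X 1 ^ hammingNorm c

noncomputable def matAct (A : Matrix (Fin 2) (Fin 2) ℂ) (p : MvPolynomial (Fin 2) ℂ) :
    MvPolynomial (Fin 2) ℂ :=
  MvPolynomial.aeval
    (fun i => MvPolynomial.C (A i 0) * MvPolynomial.X 0 + MvPolynomial.C (A i 1) * MvPolynomial.X 1) p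

noncomputable def toOneVar (p : MvPolynomial (Fin 2) ℂ) : Polynomial ℂ :=
  MvPolynomial.aeval ![Polynomial.X, 1] p

open Matrix

lemma eval_matAct (A : Matrix (Fin 2) (Fin 2) ℂ) (p : MvPolynomial (Fin 2) ℂ) (v : Fin 2 → ℂ) :
    MvPolynomial.eval v (matAct A p) = MvPolynomial.eval (A *ᵥ v) p := by
  rw [matAct, MvPolynomial.aeval_eq_bind₁, MvPolynomial.eval, MvPolynomial.eval₂Hom_bind₁]
  refine congrArg (fun w => MvPolynomial.eval₂Hom (RingHom.id ℂ) w p) (funext fun i => ?_)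
  simp [mulVec, dotProduct, Fin.sum_univ_two]

lemma matAct_eq_self_iff (A : Matrix (Fin 2) (Fin 2) ℂ) (p : MvPolynomial (Fin 2) ℂ) :
    matAct A p = p ↔ ∀ v, MvPolynomial.eval (A *ᵥ v) p = MvPolynomial.eval v p := by
  simp only [MvPolynomial.funext_iff, eval_matAct]

def glStabilizer (p : MvPolynomial (Fin 2) ℂ) : Set (GL (Fin 2) ℂ) :=
  {A | matAct A.val p = p}

open MvPolynomial in
noncomputable def linFormProd (s : Multiset ℂ) : MvPolynomial (Fin 2) ℂ :=
  (s.map fun r => X 0 - C r * X 1).prod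

lemma eval_linFormProd (s : Multiset ℂ) (v : Fin 2 → ℂ) :
    MvPolynomial.eval v (linFormProd s) = (s.map fun r => v 0 - r * v 1).prod := by
  simp [linFormProd, map_multiset_prod, Multiset.map_map]

lemma eval_linFormProd_eq_zero_iff {s : Multiset ℂ} {v : Fin 2 → ℂ} :
    MvPolynomial.eval v (linFormProd s) = 0 ↔ ∃ r ∈ s, v 0 = r * v 1 := by
  simp [eval_linFormProd, Multiset.prod_eq_zero_iff, sub_eq_zero]

lemma eval_linFormProd_vecCons_zero (s : Multiset ℂ) (c : ℂ) :
    MvPolynomial.eval ![c, 0] (linFormProd s) = c ^ Multiset.card s := by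
  simp [eval_linFormProd]

lemma eval_linFormProd_of_toFinset_subset_pair {s : Multiset ℂ} {r r' : ℂ} (hrr' : r ≠ r')
    (hs : s.toFinset ⊆ {r, r'}) (v : Fin 2 → ℂ) :
    MvPolynomial.eval v (linFormProd s) =
      (v 0 - r * v 1) ^ s.count r * (v 0 - r' * v 1) ^ s.count r' := by
  rw [eval_linFormProd, prod_multiset_map_count, prod_subset hs, prod_pair hrr']
  intro x _ hx
  rw [Multiset.count_eq_zero_of_notMem (by simpa using hx), pow_zero]

lemma isHomogeneous_linFormProd (s : Multiset ℂ) :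
    (linFormProd s).IsHomogeneous (Multiset.card s) := by
  induction s using Multiset.induction_on with
  | empty => simpa [linFormProd] using MvPolynomial.isHomogeneous_one (Fin 2) ℂ
  | cons r s ih =>
    rw [linFormProd, Multiset.map_cons, Multiset.prod_cons, Multiset.card_cons, add_comm]
    exact ((MvPolynomial.isHomogeneous_X ℂ 0).sub (MvPolynomial.isHomogeneous_C_mul_X r 1)).mul ih

lemma toOneVar_linFormProd (s : Multiset ℂ) :
    toOneVar (linFormProd s) = (s.map fun r => Polynomial.X - Polynomial.C r).prod := by
  simp [toOneVar, linFormProd, map_multiset_prod, Multiset.map_map, Polynomial.C_eq_algebraMap]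

lemma eq_of_isHomogeneous_of_toOneVar_eq {p q : MvPolynomial (Fin 2) ℂ} {n : ℕ}
    (hp : p.IsHomogeneous n) (hq : q.IsHomogeneous n) (h : toOneVar p = toOneVar q) : p = q := by
  rw [← Polynomial.homogenize_eq_of_isHomogeneous (p := toOneVar p) hp rfl,
    ← Polynomial.homogenize_eq_of_isHomogeneous (p := toOneVar q) hq rfl, h]

lemma eq_linFormProd_roots_of_isHomogeneous {p : MvPolynomial (Fin 2) ℂ} {n : ℕ}
    (hp : p.IsHomogeneous n) (hmonic : (toOneVar p).Monic) (hdeg : (toOneVar p).natDegree = n) :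
    p = linFormProd (toOneVar p).roots := by
  have hcard : Multiset.card (toOneVar p).roots = n :=
    IsAlgClosed.card_roots_eq_natDegree.trans hdeg
  refine eq_of_isHomogeneous_of_toOneVar_eq hp (hcard ▸ isHomogeneous_linFormProd _) ?_
  rw [toOneVar_linFormProd, Polynomial.prod_multiset_X_sub_C_of_monic_of_roots_card_eq hmonic
    (hcard.trans hdeg.symm)]

lemma Matrix.GeneralLinearGroup.mulVec_ne_zero {n R : Type*} [Fintype n] [DecidableEq n]
    [CommRing R] (A : GL n R) {v : n → R} (hv : v ≠ 0) : A.val *ᵥ v ≠ 0 := by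
  intro h
  have := congrArg ((A⁻¹).val *ᵥ ·) h
  rw [Matrix.mulVec_mulVec, Units.inv_mul, Matrix.one_mulVec, Matrix.mulVec_zero] at this
  exact hv this

def mobius {K : Type*} [Field K] (A : Matrix (Fin 2) (Fin 2) K) (z : K) : K :=
  (A *ᵥ ![z, 1]) 0 / (A *ᵥ ![z, 1]) 1

lemma mulVec_eq_smul_mobius {K : Type*} [Field K] {A : Matrix (Fin 2) (Fin 2) K} {z : K}
    (h : (A *ᵥ ![z, 1]) 1 ≠ 0) :
    A *ᵥ ![z, 1] = (A *ᵥ ![z, 1]) 1 • ![mobius A z, 1] := by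
  ext i
  fin_cases i
  · simp only [Fin.zero_eta, Pi.smul_apply, smul_eq_mul, Matrix.cons_val_zero]
    rw [mobius, mul_div_cancel₀ _ h]
  · simp

lemma mobius_mem_of_mem_glStabilizer {s : Multiset ℂ} {A : GL (Fin 2) ℂ}
    (hA : A ∈ glStabilizer (linFormProd s)) {r : ℂ} (hr : r ∈ s) :
    (A.val *ᵥ ![r, 1]) 1 ≠ 0 ∧ mobius A r ∈ s := by
  have hw : MvPolynomial.eval (A.val *ᵥ ![r, 1]) (linFormProd s) = 0 := by
    rw [(matAct_eq_self_iff _ _).mp hA, eval_linFormProd_eq_zero_iff]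
    exact ⟨r, hr, by simp⟩
  obtain ⟨r', hr', hw0⟩ := eval_linFormProd_eq_zero_iff.mp hw
  have hw1 : (A.val *ᵥ ![r, 1]) 1 ≠ 0 := by
    intro hw1
    refine A.mulVec_ne_zero (v := ![r, 1]) (by simp) (funext fun i => ?_)
    fin_cases i
    · simpa [hw1] using hw0
    · exact hw1
  refine ⟨hw1, ?_⟩
  rwa [mobius, hw0, mul_div_cancel_right₀ _ hw1]

lemma eq_smul_one_of_mulVec_eq_smul {K : Type*} [Field K] {M : Matrix (Fin 2) (Fin 2) K}
    {z : Fin 3 → K} (hz : Function.Injective z)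
    (hM : ∀ i, ∃ c : K, M *ᵥ ![z i, 1] = c • ![z i, 1]) :
    ∃ μ : K, M = μ • 1 := by
  choose c hc using hM
  have hrow1 (i : Fin 3) : M 1 0 * z i + M 1 1 = c i := by
    simpa [mulVec, dotProduct, Fin.sum_univ_two] using congrFun (hc i) 1
  have hq (i : Fin 3) : M 1 0 * z i ^ 2 + (M 1 1 - M 0 0) * z i - M 0 1 = 0 := by
    have hrow0 : M 0 0 * z i + M 0 1 = c i * z i := by
      simpa [mulVec, dotProduct, Fin.sum_univ_two] using congrFun (hc i) 0
    linear_combination z i * hrow1 i - hrow0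
  have hdiff (i j : Fin 3) (hij : i ≠ j) : M 1 0 * (z i + z j) + (M 1 1 - M 0 0) = 0 := by
    refine (mul_eq_zero.mp ?_).resolve_left (sub_ne_zero.mpr (hz.ne hij))
    linear_combination hq i - hq j
  have h10 : M 1 0 = 0 := by
    refine (mul_eq_zero.mp ?_).resolve_right (sub_ne_zero.mpr (hz.ne (by decide : (1 : Fin 3) ≠ 2)))
    linear_combination hdiff 0 1 (by decide) - hdiff 0 2 (by decide)
  have h11 : M 1 1 = M 0 0 := by linear_combination hdiff 0 1 (by decide) - (z 0 + z 1) * h10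
  have h01 : M 0 1 = 0 := by linear_combination -(hq 0) + z 0 ^ 2 * h10 + z 0 * h11
  refine ⟨M 0 0, ?_⟩
  ext i j
  fin_cases i <;> fin_cases j <;> simp [h10, h11, h01]

lemma exists_eq_smul_of_mobius_eq {s : Multiset ℂ} {A B : GL (Fin 2) ℂ}
    (hA : A ∈ glStabilizer (linFormProd s)) (hB : B ∈ glStabilizer (linFormProd s))
    {z : Fin 3 → ℂ} (hz : Function.Injective z) (hzs : ∀ i, z i ∈ s)
    (hAB : ∀ i, mobius A (z i) = mobius B (z i)) : ∃ μ : ℂ, A.val = μ • B.val := by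
  have hM (i : Fin 3) : ∃ c : ℂ, ((B⁻¹).val * A.val) *ᵥ ![z i, 1] = c • ![z i, 1] := by
    have eA := mulVec_eq_smul_mobius (mobius_mem_of_mem_glStabilizer hA (hzs i)).1
    have hβ := (mobius_mem_of_mem_glStabilizer hB (hzs i)).1
    have eB := mulVec_eq_smul_mobius hβ
    set α := (A.val *ᵥ ![z i, 1]) 1
    set β := (B.val *ᵥ ![z i, 1]) 1
    refine ⟨α / β, ?_⟩
    calc ((B⁻¹).val * A.val) *ᵥ ![z i, 1] = (B⁻¹).val *ᵥ ((α / β) • (B.val *ᵥ ![z i, 1])) := by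
          rw [← Matrix.mulVec_mulVec, eA, eB, smul_smul, div_mul_cancel₀ _ hβ, hAB i]
      _ = (α / β) • ![z i, 1] := by
          rw [Matrix.mulVec_smul, Matrix.mulVec_mulVec, Units.inv_mul, Matrix.one_mulVec]
  obtain ⟨μ, hμ⟩ := eq_smul_one_of_mulVec_eq_smul hz hM
  refine ⟨μ, ?_⟩
  rw [← one_mul A.val, ← Units.mul_inv B, mul_assoc, hμ, Matrix.mul_smul, Matrix.mul_one]

lemma pow_card_eq_one_of_eq_smul {s : Multiset ℂ} {A B : GL (Fin 2) ℂ}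
    (hA : A ∈ glStabilizer (linFormProd s)) (hB : B ∈ glStabilizer (linFormProd s)) {μ : ℂ}
    (hAB : A.val = μ • B.val) : μ ^ Multiset.card s = 1 := by
  set v := (B⁻¹).val *ᵥ ![1, 0]
  have hBv : B.val *ᵥ v = ![1, 0] := by
    rw [Matrix.mulVec_mulVec, Units.mul_inv, Matrix.one_mulVec]
  have hAv : A.val *ᵥ v = ![μ, 0] := by
    rw [hAB, Matrix.smul_mulVec, hBv]; simp
  have := ((matAct_eq_self_iff _ _).mp hA v).trans ((matAct_eq_self_iff _ _).mp hB v).symm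
  rwa [hAv, hBv, eval_linFormProd_vecCons_zero, eval_linFormProd_vecCons_zero, one_pow] at this

lemma finite_setOf_pow_eq_one {R : Type*} [CommRing R] [IsDomain R] {k : ℕ} (hk : 0 < k) :
    {μ : R | μ ^ k = 1}.Finite :=
  (Polynomial.nthRootsFinset k (1 : R)).finite_toSet.subset
    fun _ hμ => (Polynomial.mem_nthRootsFinset hk 1).mpr hμ

lemma glStabilizer_linFormProd_finite {s : Multiset ℂ} (hs : 3 ≤ s.toFinset.card) :
    (glStabilizer (linFormProd s)).Finite := by
  obtain ⟨a, ha, b, hb, c, hc, hab, hac, hbc⟩ := Finset.two_lt_card.mp hs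
  set z : Fin 3 → ℂ := ![a, b, c]
  have hz : Function.Injective z := by
    intro i j
    fin_cases i <;> fin_cases j <;> simp [z, hab, hac, hbc, hab.symm, hac.symm, hbc.symm]
  have hzs (i : Fin 3) : z i ∈ s := by
    rw [Multiset.mem_toFinset] at ha hb hc
    fin_cases i <;> simpa [z]
  have hcard : 0 < Multiset.card s := by
    have := Multiset.toFinset_card_le s
    omega
  refine Set.Finite.of_finite_fibers (fun (A : GL (Fin 2) ℂ) i => mobius A (z i)) ?_ ?_
  · refine (Set.Finite.pi fun _ => s.toFinset.finite_toSet).subset ?_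
    rintro _ ⟨A, hA, rfl⟩ i -
    exact Multiset.mem_toFinset.mpr (mobius_mem_of_mem_glStabilizer hA (hzs i)).2
  · rintro _ ⟨B, hB, rfl⟩
    refine (((finite_setOf_pow_eq_one (R := ℂ) hcard).image (· • B.val)).preimage
      Units.val_injective.injOn).subset ?_
    rintro A ⟨hA, hAB⟩
    obtain ⟨μ, hμ⟩ := exists_eq_smul_of_mobius_eq hA hB hz hzs (congrFun hAB)
    exact ⟨μ, pow_card_eq_one_of_eq_smul hA hB hμ, hμ.symm⟩

section Torus

variable {K : Type*} [Field K]

def lineChange {r r' : K} (h : r ≠ r') : GL (Fin 2) K :=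
  .mkOfDetNeZero !![1, -r; 1, -r'] <| by
    rw [Matrix.det_fin_two_of]
    exact fun h0 => h (by linear_combination h0)

def diagUnits (p : Kˣ × Kˣ) : GL (Fin 2) K :=
  .mkOfDetNeZero (diagonal ![p.1, p.2]) (by simp)

def torusElem {r r' : K} (h : r ≠ r') (p : Kˣ × Kˣ) : GL (Fin 2) K :=
  (lineChange h)⁻¹ * diagUnits p * lineChange h

lemma torusElem_injective {r r' : K} (h : r ≠ r') : Function.Injective (torusElem h) := by
  intro p q hpq
  have hd : diagUnits p = diagUnits q := by simpa [torusElem] using hpq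
  have hv := Matrix.diagonal_injective (congrArg Units.val hd)
  exact Prod.ext (Units.ext (congrFun hv 0)) (Units.ext (congrFun hv 1))

lemma torusElem_mulVec {r r' : K} (h : r ≠ r') (p : Kˣ × Kˣ) (v : Fin 2 → K) :
    let w := (torusElem h p).val *ᵥ v
    w 0 - r * w 1 = p.1 * (v 0 - r * v 1) ∧ w 0 - r' * w 1 = p.2 * (v 0 - r' * v 1) := by
  have hconj :
      (lineChange h).val * (torusElem h p).val = (diagUnits p).val * (lineChange h).val := by
    rw [← Units.val_mul, ← Units.val_mul, torusElem, ← mul_assoc, ← mul_assoc, mul_inv_cancel,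
      one_mul]
  have := congrArg (· *ᵥ v) hconj
  simp only [← Matrix.mulVec_mulVec] at this
  constructor
  · simpa [lineChange, diagUnits, mulVec, dotProduct, Fin.sum_univ_two, sub_eq_add_neg]
      using congrFun this 0
  · simpa [lineChange, diagUnits, mulVec, dotProduct, Fin.sum_univ_two, sub_eq_add_neg]
      using congrFun this 1

lemma exists_injective_pow_mul_pow_eq_one [CharZero K] (a b : ℕ) :
    ∃ f : ℕ → Kˣ × Kˣ, Function.Injective f ∧ ∀ k, (f k).1 ^ a * (f k).2 ^ b = 1 := by
  let t (k : ℕ) : Kˣ := Units.mk0 (k + 1 : K) k.cast_add_one_ne_zero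
  have ht (k l : ℕ) (m : ℕ) (hm : m ≠ 0) (hkl : t k ^ m = t l ^ m) : k = l := by
    have hkl' : ((k : K) + 1) ^ m = ((l : K) + 1) ^ m := by simpa [t] using congrArg Units.val hkl
    have : (k + 1) ^ m = (l + 1) ^ m := by exact_mod_cast hkl'
    simpa using Nat.pow_left_injective hm this
  rcases Nat.eq_zero_or_pos b with rfl | hb
  · refine ⟨fun k => (1, t k), fun k l hkl => ht k l 1 one_ne_zero ?_, by simp⟩
    simpa using congrArg Prod.snd hkl
  · refine ⟨fun k => (t k ^ b, (t k ^ a)⁻¹), fun k l hkl => ht k l b hb.ne' (congrArg Prod.fst hkl),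
      fun k => ?_⟩
    rw [← pow_mul, inv_pow, ← pow_mul, mul_comm b a, mul_inv_cancel]

end Torus

lemma torusElem_mem_glStabilizer {s : Multiset ℂ} {r r' : ℂ} (h : r ≠ r')
    (hs : s.toFinset ⊆ {r, r'}) {p : ℂˣ × ℂˣ} (hp : p.1 ^ s.count r * p.2 ^ s.count r' = 1) :
    torusElem h p ∈ glStabilizer (linFormProd s) := by
  refine (matAct_eq_self_iff _ _).mpr fun v => ?_
  obtain ⟨h0, h1⟩ := torusElem_mulVec h p v
  rw [eval_linFormProd_of_toFinset_subset_pair h hs, eval_linFormProd_of_toFinset_subset_pair h hs,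
    h0, h1, mul_pow, mul_pow, mul_mul_mul_comm, ← Units.val_pow_eq_pow_val,
    ← Units.val_pow_eq_pow_val, ← Units.val_mul, hp, Units.val_one, one_mul]

lemma glStabilizer_linFormProd_infinite {s : Multiset ℂ} (hs : s.toFinset.card ≤ 2) :
    (glStabilizer (linFormProd s)).Infinite := by
  obtain ⟨t, hst, ht⟩ := Infinite.exists_superset_card_eq s.toFinset 2 hs
  obtain ⟨r, r', hrr', rfl⟩ := Finset.card_eq_two.mp ht
  obtain ⟨f, hf, hf1⟩ := exists_injective_pow_mul_pow_eq_one (K := ℂ) (s.count r) (s.count r')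
  exact Set.infinite_of_injective_forall_mem ((torusElem_injective hrr').comp hf)
    fun k => torusElem_mem_glStabilizer hrr' hst (hf1 k)

lemma glStabilizer_linFormProd_finite_iff (s : Multiset ℂ) :
    (glStabilizer (linFormProd s)).Finite ↔ 3 ≤ s.toFinset.card := by
  refine ⟨fun hfin => ?_, glStabilizer_linFormProd_finite⟩
  by_contra! hs
  exact glStabilizer_linFormProd_infinite (Nat.le_of_lt_succ hs) hfin

section WeightEnumerator

variable {F : Type*} [Field F] [Fintype F] [DecidableEq F] {ι : Type*} [Fintype ι]
  (C : Submodule F (ι → F))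

lemma isHomogeneous_homWeightEnum (R : Type*) [CommRing R] :
    (homWeightEnum R C).IsHomogeneous (Fintype.card ι) := by
  refine MvPolynomial.IsHomogeneous.sum _ _ _ fun c _ => ?_
  have h0 := MvPolynomial.isHomogeneous_X_pow (R := R) (0 : Fin 2) (Fintype.card ι - hammingNorm c)
  have h := h0.mul (MvPolynomial.isHomogeneous_X_pow (1 : Fin 2) (hammingNorm c))
  rwa [Nat.sub_add_cancel hammingNorm_le_card_fintype] at h

lemma toOneVar_homWeightEnum : toOneVar (homWeightEnum ℂ C) =
    ∑ c ∈ (Set.toFinite (C : Set (ι → F))).toFinset,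
      Polynomial.X ^ (Fintype.card ι - hammingNorm c) := by
  simp [toOneVar, homWeightEnum]

lemma natDegree_toOneVar_homWeightEnum_le :
    (toOneVar (homWeightEnum ℂ C)).natDegree ≤ Fintype.card ι := by
  rw [toOneVar_homWeightEnum]
  exact Polynomial.natDegree_sum_le_of_forall_le _ _ fun c _ =>
    (Polynomial.natDegree_X_pow_le _).trans (Nat.sub_le _ _)

lemma coeff_toOneVar_homWeightEnum :
    (toOneVar (homWeightEnum ℂ C)).coeff (Fintype.card ι) = 1 := by
  rw [toOneVar_homWeightEnum, Polynomial.finsetSum_coeff,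
    Finset.sum_eq_single_of_mem 0 (by simp)]
  · simp
  · intro c _ hc
    have := hammingNorm_le_card_fintype (x := c)
    have := hammingNorm_pos_iff.mpr hc
    rw [Polynomial.coeff_X_pow, if_neg (by omega)]

lemma homWeightEnum_eq_linFormProd_roots :
    homWeightEnum ℂ C = linFormProd (toOneVar (homWeightEnum ℂ C)).roots :=
  eq_linFormProd_roots_of_isHomogeneous (isHomogeneous_homWeightEnum C ℂ)
    (Polynomial.monic_of_natDegree_le_of_coeff_eq_one _
      (natDegree_toOneVar_homWeightEnum_le C) (coeff_toOneVar_homWeightEnum C))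
    (Polynomial.natDegree_eq_of_le_of_coeff_ne_zero (natDegree_toOneVar_homWeightEnum_le C)
      (by rw [coeff_toOneVar_homWeightEnum]; exact one_ne_zero))

end WeightEnumerator

/-- the stabilizer in `GL₂(ℂ)` of the homogeneous weight enumerator of a
linear code is finite iff the one-variable weight enumerator has at least three distinct
complex roots. -/
theorem stabilizer_finite_iff_three_roots {F : Type*} [Field F] [Fintype F] [DecidableEq F]
    {n : ℕ} (C : Submodule F (Fin n → F)) :
    {A : GL (Fin 2) ℂ | matAct A.val (homWeightEnum ℂ C) = homWeightEnum ℂ C}.Finite ↔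
      3 ≤ (toOneVar (homWeightEnum ℂ C)).roots.toFinset.card := by
  rw [← glStabilizer_linFormProd_finite_iff, ← homWeightEnum_eq_linFormProd_roots]
  rfl
end
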